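/- The kinetic jump operators satisfy, for all sites x ≠ y in Fin n: (i) they have degree zero: G L_{x→y} G = L_{x→y}; (ii) the eigenoperator relation F L_{x→y} − L_{x→y} F = (ε_y − ε_x) L_{x→y}, equivalently exp(itF) L_{x→y} exp(−itF) = e^{it(ε_y − ε_x)} L_{x→y} for all t ∈ ℝ; (iii) the β-KMS (detailed balance) relation L_{x→y}ᴴ = e^{−β(ε_y − ε_x)/2} L_{y→x}; in particular Γ_{x→y}/Γ_{y→x} = e^{−β(ε_y − ε_x)}. -/

import Mathlib

open Matrix

noncomputable section JW

/-- The operator algebra of `n` fermionic sites: `2^n × 2^n` complex matrices, with the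
index set realized as `Fin n → Fin 2` (the tensor-product basis). -/
abbrev FermionAlg (n : ℕ) := Matrix (Fin n → Fin 2) (Fin n → Fin 2) ℂ

/-- Jordan–Wigner annihilation operator at site `k`:
`a_k = σ₃^{⊗ k} ⊗ σ⁻ ⊗ 1₂^{⊗ (n−k−1)}`, with `σ⁻ = [[0,0],[1,0]]` and
`σ₃ = [[1,0],[0,−1]]`, written entrywise in the tensor-product basis
(the entry of a tensor product at `(v, w)` is the product of the entries of the factors). -/
def jwA (n : ℕ) (k : Fin n) : FermionAlg n :=
  Matrix.of fun v w => ∏ j : Fin n,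
    if j < k then (if v j = w j then (-1 : ℂ) ^ (v j : ℕ) else 0)
    else if j = k then (if v j = 1 ∧ w j = 0 then 1 else 0)
    else (if v j = w j then 1 else 0)

/-- The number operator `n_k = a_kᴴ a_k`. -/
def numOp (n : ℕ) (k : Fin n) : FermionAlg n := (jwA n k)ᴴ * jwA n k

/-- The grading unitary `G = ∏_k (1 − 2 n_k)`. -/
def grading (n : ℕ) : FermionAlg n :=
  (List.ofFn fun k : Fin n => (1 - 2 • numOp n k)).prod

/-- The free energy `F = Σ_k (ε_k − μ) n_k`. -/
def freeEnergy (n : ℕ) (ε : Fin n → ℝ) (μ : ℝ) : FermionAlg n :=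
  ∑ k, ((ε k - μ : ℝ) : ℂ) • numOp n k

/-- The Gibbs state `ρ(A) = Tr(exp(−βF)·A)/Tr(exp(−βF))`. -/
def gibbs (n : ℕ) (ε : Fin n → ℝ) (μ β : ℝ) (A : FermionAlg n) : ℂ :=
  ((NormedSpace.exp ((-(β : ℂ)) • freeEnergy n ε μ)) * A).trace /
    (NormedSpace.exp ((-(β : ℂ)) • freeEnergy n ε μ)).trace

end JW

noncomputable section

/-- Mott's jump rate `Γ_{x→y} = Γ₀ (e^{−|x−y|/r}/Z) e^{−β(ε_y−ε_x)⁺}`. -/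
def jumpRate (n : ℕ) (Γ₀ r Z β : ℝ) (ε : Fin n → ℝ) (x y : Fin n) : ℝ :=
  Γ₀ * (Real.exp (-(((|(x : ℤ) - (y : ℤ)| : ℤ) : ℝ)) / r) / Z) *
    Real.exp (-(β * max (ε y - ε x) 0))

/-- The kinetic jump operator `L_{x→y} = √Γ_{x→y} · a_yᴴ a_x`. -/
def jumpOp (n : ℕ) (Γ₀ r Z β : ℝ) (ε : Fin n → ℝ) (x y : Fin n) : FermionAlg n :=
  ((Real.sqrt (jumpRate n Γ₀ r Z β ε x y) : ℝ) : ℂ) • ((jwA n y)ᴴ * jwA n x)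

/-! In the occupation basis every operator involved is diagonal except the hop `a_yᴴ a_x`,
whose nonzero entries `(v, w)` have `v = w ∘ swap x y`, with `x` occupied and `y` empty in `w`.
Sandwiching such a matrix between diagonal matrices `diag d` and `diag e` multiplies it by the
constant `d v * e w` whenever that value is the same on its support: the parity is invariant under
the swap and squares to `1`, and the energy difference along a hop is `ε_y - ε_x`. Detailed balance
of the rates is the identity `(ε_y - ε_x)⁺ - (ε_x - ε_y)⁺ = ε_y - ε_x`. -/

namespace Matrix

variable {ι α : Type*} [Fintype ι] [DecidableEq ι]

theorem diagonal_mul_mul_diagonal_eq_smul [CommSemiring α] {A : Matrix ι ι α} {d e : ι → α}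
    {c : α} (h : ∀ i j, A i j ≠ 0 → d i * e j = c) :
    diagonal d * A * diagonal e = c • A := by
  ext i j
  rw [mul_diagonal, diagonal_mul, smul_apply, smul_eq_mul]
  by_cases hij : A i j = 0
  · simp [hij]
  · rw [← h i j hij]; ring

theorem diagonal_mul_sub_mul_diagonal_eq_smul [CommRing α] {A : Matrix ι ι α} {d : ι → α}
    {c : α} (h : ∀ i j, A i j ≠ 0 → d i - d j = c) :
    diagonal d * A - A * diagonal d = c • A := by
  ext i j
  rw [sub_apply, mul_diagonal, diagonal_mul, smul_apply, smul_eq_mul]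
  by_cases hij : A i j = 0
  · simp [hij]
  · rw [← h i j hij]; ring

theorem exp_smul_diagonal (s : ℂ) (d : ι → ℂ) :
    NormedSpace.exp (s • diagonal d) = diagonal fun i => Complex.exp (s * d i) := by
  rw [← diagonal_smul, exp_diagonal]
  ext i j
  simp [diagonal_apply, Complex.exp_eq_exp_ℂ]

end Matrix

theorem Finset.sum_mul_comp_swap_sub_sum_mul {ι R : Type*} [Fintype ι] [DecidableEq ι]
    [CommRing R] (a g : ι → R) {x y : ι} (hxy : x ≠ y) :
    ∑ k, a k * g (Equiv.swap x y k) - ∑ k, a k * g k = (a y - a x) * (g x - g y) := by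
  rw [← Equiv.sum_comp (Equiv.swap x y) fun k => a k * g (Equiv.swap x y k),
    ← Finset.sum_sub_distrib, Fintype.sum_eq_add x y hxy]
  · simp only [Equiv.swap_apply_left, Equiv.swap_apply_right]; ring
  · rintro k ⟨hkx, hky⟩
    simp [Equiv.swap_apply_of_ne_of_ne hkx hky]

section JordanWigner

variable {n : ℕ}

/-- The value `0` of `v k` encodes an occupied site: `σ⁻` maps the basis vector `0` to `1`. -/
def occupation (v : Fin n → Fin 2) (k : Fin n) : ℂ := if v k = 0 then 1 else 0

def jwSign (k : Fin n) (v : Fin n → Fin 2) : ℂ :=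
  ∏ j : Fin n, if j < k then (-1 : ℂ) ^ (v j : ℕ) else 1

theorem jwSign_mul_self (k : Fin n) (v : Fin n → Fin 2) : jwSign k v * jwSign k v = 1 := by
  rw [jwSign, ← Finset.prod_mul_distrib]
  refine Finset.prod_eq_one fun j _ => ?_
  split_ifs
  · rw [← pow_add, ← two_mul, pow_mul, neg_one_sq, one_pow]
  · exact one_mul 1

theorem star_jwSign (k : Fin n) (v : Fin n → Fin 2) : star (jwSign k v) = jwSign k v := by
  rw [jwSign, star_prod]
  refine Finset.prod_congr rfl fun j _ => ?_
  split_ifs <;> simp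

theorem jwA_apply (k : Fin n) (v w : Fin n → Fin 2) :
    jwA n k v w = if w k = 0 ∧ v = Function.update w k 1 then jwSign k w else 0 := by
  rw [jwA, of_apply]
  split_ifs with h <;> rw [Function.eq_update_iff] at h
  · obtain ⟨hwk, hvk, hvw⟩ := h
    refine Finset.prod_congr rfl fun j _ => ?_
    rcases lt_trichotomy j k with hjk | rfl | hkj
    · simp [hjk, hvw j hjk.ne]
    · simp [hwk, hvk]
    · simp [hkj.not_gt, hkj.ne', hvw j hkj.ne']
  · by_cases hvk : v k = 1 ∧ w k = 0
    · obtain ⟨j, hjk, hvw⟩ : ∃ j, j ≠ k ∧ v j ≠ w j := by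
        by_contra! hvw
        exact h ⟨hvk.2, hvk.1, hvw⟩
      refine Finset.prod_eq_zero (Finset.mem_univ j) ?_
      rcases hjk.lt_or_gt with hjk | hkj
      · simp [hjk, hvw]
      · simp [hkj.not_gt, hkj.ne', hvw]
    · exact Finset.prod_eq_zero (Finset.mem_univ k) (by simp [hvk])

theorem numOp_eq_diagonal (k : Fin n) : numOp n k = diagonal fun v => occupation v k := by
  ext v w
  simp only [numOp, mul_apply, conjTranspose_apply, jwA_apply]
  by_cases hvk : v k = 0
  · rw [Finset.sum_eq_single (Function.update v k 1) (fun u _ hu => by simp [hu])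
      (by simp)]
    by_cases hvw : v = w
    · subst hvw
      simp [hvk, occupation, star_jwSign, jwSign_mul_self]
    · have hupd : ¬(w k = 0 ∧ Function.update v k 1 = Function.update w k 1) := by
        rintro ⟨hwk, hupd⟩
        refine hvw (funext fun j => ?_)
        by_cases hjk : j = k
        · rw [hjk, hvk, hwk]
        · simpa [hjk] using congr_fun hupd j
      simp [hupd, hvw]
  · rcases em (v = w) with rfl | hvw <;> simp [occupation, *]

def parity (v : Fin n → Fin 2) : ℂ := ∏ k, (1 - 2 * occupation v k)

theorem parity_comp_swap (v : Fin n → Fin 2) (x y : Fin n) :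
    parity (v ∘ Equiv.swap x y) = parity v :=
  Equiv.prod_comp (Equiv.swap x y) fun k => 1 - 2 * occupation v k

theorem parity_mul_self (v : Fin n → Fin 2) : parity v * parity v = 1 := by
  rw [parity, ← Finset.prod_mul_distrib]
  refine Finset.prod_eq_one fun k _ => ?_
  unfold occupation
  split_ifs <;> norm_num

theorem grading_eq_diagonal : grading n = diagonal parity := by
  have hfactor (k : Fin n) : 1 - 2 • numOp n k =
      diagonalRingHom (Fin n → Fin 2) ℂ fun v => 1 - 2 * occupation v k := by
    ext v w
    rcases em (v = w) with rfl | hvw <;> simp [numOp_eq_diagonal, two_smul, two_mul, *]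
  calc grading n
      = ((List.ofFn fun k v => 1 - 2 * occupation v k).map
          (diagonalRingHom (Fin n → Fin 2) ℂ)).prod := by
        rw [grading, List.map_ofFn]; exact congrArg _ (congrArg _ (funext hfactor))
    _ = diagonal parity := by
        rw [← map_list_prod, List.prod_ofFn, diagonalRingHom_apply]
        congr 1; ext v; simp [parity]

def energy (ε : Fin n → ℝ) (μ : ℝ) (v : Fin n → Fin 2) : ℂ :=
  ∑ k, ((ε k - μ : ℝ) : ℂ) * occupation v k

theorem freeEnergy_eq_diagonal (ε : Fin n → ℝ) (μ : ℝ) :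
    freeEnergy n ε μ = diagonal (energy ε μ) := by
  ext v w
  rcases em (v = w) with rfl | hvw <;>
    simp [freeEnergy, energy, numOp_eq_diagonal, Matrix.sum_apply, *]

theorem energy_comp_swap_sub_energy (ε : Fin n → ℝ) (μ : ℝ) {x y : Fin n} (hxy : x ≠ y)
    {w : Fin n → Fin 2} (hwx : w x = 0) (hwy : w y = 1) :
    energy ε μ (w ∘ Equiv.swap x y) - energy ε μ w = ((ε y - ε x : ℝ) : ℂ) := by
  refine (Finset.sum_mul_comp_swap_sub_sum_mul (fun k => ((ε k - μ : ℝ) : ℂ)) (occupation w)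
    hxy).trans ?_
  simp [occupation, hwx, hwy]

theorem hop_apply_ne_zero {x y : Fin n} (hxy : x ≠ y) {v w : Fin n → Fin 2}
    (h : ((jwA n y)ᴴ * jwA n x) v w ≠ 0) :
    w x = 0 ∧ w y = 1 ∧ v = w ∘ Equiv.swap x y := by
  obtain ⟨u, -, hu⟩ := Finset.exists_ne_zero_of_sum_ne_zero h
  simp only [conjTranspose_apply, jwA_apply] at hu
  obtain ⟨hvy, rfl⟩ : v y = 0 ∧ u = Function.update v y 1 := by
    by_contra hvu; simp [hvu] at hu
  obtain ⟨hwx, hupd⟩ : w x = 0 ∧ Function.update v y 1 = Function.update w x 1 := by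
    by_contra hwu; simp [hwu] at hu
  have hvx : v x = 1 := by simpa [hxy] using congr_fun hupd x
  have hwy : w y = 1 := by simpa [hxy.symm] using (congr_fun hupd y).symm
  refine ⟨hwx, hwy, funext fun j => ?_⟩
  rcases eq_or_ne j x with rfl | hjx
  · simp [hvx, hwy]
  rcases eq_or_ne j y with rfl | hjy
  · simp [hvy, hwx]
  simpa [Equiv.swap_apply_of_ne_of_ne hjx hjy, hjx, hjy] using congr_fun hupd j

end JordanWigner

section JumpOperators

variable {n : ℕ} {Γ₀ r Z β : ℝ} {ε : Fin n → ℝ}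

theorem jumpOp_apply_ne_zero {x y : Fin n} (hxy : x ≠ y) {v w : Fin n → Fin 2}
    (h : jumpOp n Γ₀ r Z β ε x y v w ≠ 0) :
    w x = 0 ∧ w y = 1 ∧ v = w ∘ Equiv.swap x y :=
  hop_apply_ne_zero hxy (right_ne_zero_of_mul h)

theorem energy_sub_energy_of_jumpOp_apply_ne_zero (μ : ℝ) {x y : Fin n} (hxy : x ≠ y)
    {v w : Fin n → Fin 2} (h : jumpOp n Γ₀ r Z β ε x y v w ≠ 0) :
    energy ε μ v - energy ε μ w = ((ε y - ε x : ℝ) : ℂ) := by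
  obtain ⟨hwx, hwy, rfl⟩ := jumpOp_apply_ne_zero hxy h
  exact energy_comp_swap_sub_energy ε μ hxy hwx hwy

theorem jumpRate_eq_exp_mul_jumpRate (x y : Fin n) :
    jumpRate n Γ₀ r Z β ε x y = Real.exp (-(β * (ε y - ε x))) * jumpRate n Γ₀ r Z β ε y x := by
  have hmax : -(β * max (ε y - ε x) 0) = -(β * (ε y - ε x)) + -(β * max (ε x - ε y) 0) := by
    rcases le_total (ε y - ε x) 0 with h | h
    · rw [max_eq_right h, max_eq_left (by linarith)]; ring
    · rw [max_eq_left h, max_eq_right (by linarith)]; ring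
  rw [jumpRate, jumpRate, abs_sub_comm (x : ℤ), hmax, Real.exp_add]
  ring

theorem jumpRate_pos (hΓ₀ : 0 < Γ₀) (hZ : 0 < Z) (x y : Fin n) :
    0 < jumpRate n Γ₀ r Z β ε x y := by
  unfold jumpRate; positivity

theorem conjTranspose_jumpOp (x y : Fin n) :
    (jumpOp n Γ₀ r Z β ε x y)ᴴ =
      ((Real.exp (-(β * (ε y - ε x)) / 2) : ℝ) : ℂ) • jumpOp n Γ₀ r Z β ε y x := by
  rw [jumpOp, jumpOp, conjTranspose_smul, conjTranspose_mul, conjTranspose_conjTranspose,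
    smul_smul, jumpRate_eq_exp_mul_jumpRate, Real.sqrt_mul (Real.exp_pos _).le,
    ← Real.exp_half, Complex.star_def, Complex.conj_ofReal, Complex.ofReal_mul]

end JumpOperators

theorem kinetic_jump_operators_properties_general
    (n : ℕ) (β μ Γ₀ r Z : ℝ) (hΓ₀ : 0 < Γ₀)
    (hZ : 0 < Z) (ε : Fin n → ℝ) (x y : Fin n) (hxy : x ≠ y) :
    (grading n * jumpOp n Γ₀ r Z β ε x y * grading n = jumpOp n Γ₀ r Z β ε x y) ∧
    (freeEnergy n ε μ * jumpOp n Γ₀ r Z β ε x y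
        - jumpOp n Γ₀ r Z β ε x y * freeEnergy n ε μ
      = (((ε y - ε x : ℝ)) : ℂ) • jumpOp n Γ₀ r Z β ε x y) ∧
    (∀ t : ℝ,
      NormedSpace.exp ((Complex.I * t) • freeEnergy n ε μ) * jumpOp n Γ₀ r Z β ε x y *
          NormedSpace.exp ((-(Complex.I * t)) • freeEnergy n ε μ)
      = Complex.exp (Complex.I * t * (((ε y - ε x : ℝ)) : ℂ)) • jumpOp n Γ₀ r Z β ε x y) ∧
    ((jumpOp n Γ₀ r Z β ε x y)ᴴ
      = ((Real.exp (-(β * (ε y - ε x)) / 2) : ℝ) : ℂ) • jumpOp n Γ₀ r Z β ε y x) ∧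
    (jumpRate n Γ₀ r Z β ε x y / jumpRate n Γ₀ r Z β ε y x
      = Real.exp (-(β * (ε y - ε x)))) := by
  have henergy {v w : Fin n → Fin 2} (h : jumpOp n Γ₀ r Z β ε x y v w ≠ 0) :=
    energy_sub_energy_of_jumpOp_apply_ne_zero μ hxy h
  refine ⟨?_, ?_, fun t => ?_, conjTranspose_jumpOp x y, ?_⟩
  · rw [grading_eq_diagonal, diagonal_mul_mul_diagonal_eq_smul (c := 1), one_smul]
    intro v w h
    obtain ⟨-, -, rfl⟩ := jumpOp_apply_ne_zero hxy h
    rw [parity_comp_swap, parity_mul_self]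
  · rw [freeEnergy_eq_diagonal]
    exact diagonal_mul_sub_mul_diagonal_eq_smul fun v w h => henergy h
  · rw [freeEnergy_eq_diagonal, exp_smul_diagonal, exp_smul_diagonal]
    refine diagonal_mul_mul_diagonal_eq_smul fun v w h => ?_
    rw [← Complex.exp_add, ← henergy h]
    ring_nf
  · rw [jumpRate_eq_exp_mul_jumpRate, mul_div_assoc, div_self (jumpRate_pos hΓ₀ hZ y x).ne',
      mul_one]

/-- For sites `x ≠ y`, the kinetic jump operators `L_{x→y}` (i) have
degree zero (`G L G = L`), (ii) satisfy the eigenoperator relation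
`F L_{x→y} − L_{x→y} F = (ε_y − ε_x) L_{x→y}`, equivalently
`exp(itF) L_{x→y} exp(−itF) = e^{it(ε_y−ε_x)} L_{x→y}` for all real `t`, and (iii) satisfy
the β-KMS relation `L_{x→y}ᴴ = e^{−β(ε_y−ε_x)/2} L_{y→x}`; in particular
`Γ_{x→y}/Γ_{y→x} = e^{−β(ε_y−ε_x)}`. -/
theorem kinetic_jump_operators_properties
    (n : ℕ) (hn : 1 ≤ n) (β μ Γ₀ r Z : ℝ) (hβ : 0 < β) (hΓ₀ : 0 < Γ₀) (hr : 0 < r)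
    (hZ : 0 < Z) (ε : Fin n → ℝ) (x y : Fin n) (hxy : x ≠ y) :
    (grading n * jumpOp n Γ₀ r Z β ε x y * grading n = jumpOp n Γ₀ r Z β ε x y) ∧
    (freeEnergy n ε μ * jumpOp n Γ₀ r Z β ε x y
        - jumpOp n Γ₀ r Z β ε x y * freeEnergy n ε μ
      = (((ε y - ε x : ℝ)) : ℂ) • jumpOp n Γ₀ r Z β ε x y) ∧
    (∀ t : ℝ,
      NormedSpace.exp ((Complex.I * t) • freeEnergy n ε μ) * jumpOp n Γ₀ r Z β ε x y *
          NormedSpace.exp ((-(Complex.I * t)) • freeEnergy n ε μ)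
      = Complex.exp (Complex.I * t * (((ε y - ε x : ℝ)) : ℂ)) • jumpOp n Γ₀ r Z β ε x y) ∧
    ((jumpOp n Γ₀ r Z β ε x y)ᴴ
      = ((Real.exp (-(β * (ε y - ε x)) / 2) : ℝ) : ℂ) • jumpOp n Γ₀ r Z β ε y x) ∧
    (jumpRate n Γ₀ r Z β ε x y / jumpRate n Γ₀ r Z β ε y x
      = Real.exp (-(β * (ε y - ε x)))) :=
  kinetic_jump_operators_properties_general n β μ Γ₀ r Z hΓ₀ hZ ε x y hxy

end
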